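/- Consider the linear sampled-data system ẋ(t) = A₀ x(t) + A₁ x(t_k) for t ∈ [t_k, t_{k+1}], with constant sampling period T_k = T > 0 for all k, where A₀, A₁ are real n × n matrices. This system is globally exponentially stable if and only if ρ(e^{A₀ T} + ∫₀^T e^{A₀(T−θ)} A₁ dθ) < 1, where ρ denotes spectral radius and e^{A₀ T} the matrix exponential. -/

import Mathlib

open Matrix

/-- A (global, continuous) solution of the linear sampled-data system
`ẋ(t) = A₀ x(t) + A₁ x(t_k)` for `t ∈ [t_k, t_{k+1}]`, with the constant sampling
period `T`, so that `t_k = kT`. -/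
def IsLinSampledSolution {n : ℕ} (A₀ A₁ : Matrix (Fin n) (Fin n) ℝ) (T : ℝ)
    (x : ℝ → Fin n → ℝ) : Prop :=
  Continuous x ∧
    ∀ k : ℕ, ∀ t ∈ Set.Icc (k * T) ((k + 1) * T),
      HasDerivWithinAt x (A₀.mulVec (x t) + A₁.mulVec (x (k * T)))
        (Set.Icc (k * T) ((k + 1) * T)) t

/-! On a sampling interval the solution is `x(kT + s) = Φ(s) x(kT)`, where
`Φ(s) = e^{sA₀} + (∫₀ˢ e^{uA₀} du) A₁` solves `Φ' = A₀ Φ + A₁`, `Φ(0) = 1` (uniqueness of ODE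
solutions). Hence `x(kT) = Φ(T)ᵏ x(0)`, and `Φ(T)` is the matrix of the statement. Every initial
value starts a solution, so exponential stability amounts to exponential decay of `‖Φ(T)ᵏ‖`.
Since complexification preserves the `L¹-L∞` operator norm, Gelfand's formula turns decay of
`‖Φ(T)ᵏ‖` into `ρ(Φ(T)) < 1` and back. -/

open Filter Topology NormedSpace
open scoped NNReal ENNReal

section BanachAlgebra

variable {A : Type*} [NormedRing A] [NormedAlgebra ℂ A] [CompleteSpace A]

theorem spectralRadius_lt_one_of_tendsto_norm_pow {a : A}
    (h : Tendsto (fun k => ‖a ^ k‖) atTop (𝓝 0)) : spectralRadius ℂ a < 1 := by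
  have h1 : Tendsto (fun k => ‖a ^ (k + 1)‖ * ‖(1 : A)‖) atTop (𝓝 0) := by
    simpa using (h.comp (tendsto_add_atTop_nat 1)).mul_const ‖(1 : A)‖
  obtain ⟨k, hk⟩ := (h1.eventually_lt_const one_pos).exists
  calc spectralRadius ℂ a
      ≤ (‖a ^ (k + 1)‖₊ : ℝ≥0∞) ^ (1 / (k + 1) : ℝ) * (‖(1 : A)‖₊ : ℝ≥0∞) ^ (1 / (k + 1) : ℝ) :=
        spectrum.spectralRadius_le_pow_nnnorm_pow_one_div ℂ a k
    _ = ((‖a ^ (k + 1)‖₊ * ‖(1 : A)‖₊ : ℝ≥0) : ℝ≥0∞) ^ (1 / (k + 1) : ℝ) := by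
        rw [ENNReal.coe_mul, ENNReal.mul_rpow_of_nonneg _ _ (by positivity)]
    _ < 1 := ENNReal.rpow_lt_one (by exact_mod_cast hk) (by positivity)

theorem exists_norm_pow_le_of_spectralRadius_lt {a : A} {r : ℝ≥0}
    (h : spectralRadius ℂ a < r) : ∃ C > 0, ∀ k : ℕ, ‖a ^ k‖ ≤ C * r ^ k := by
  have hr : 0 < r := ENNReal.coe_pos.1 (pos_of_gt h)
  have hev : ∀ᶠ k : ℕ in atTop, ‖a ^ k‖ ≤ ‖(r : ℝ) ^ k‖ := by
    filter_upwards
      [(spectrum.pow_norm_pow_one_div_tendsto_nhds_spectralRadius a).eventually_lt_const h,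
        eventually_ne_atTop 0] with k hk hk0
    rw [ENNReal.ofReal_lt_iff_lt_toReal (by positivity) ENNReal.coe_ne_top,
      ENNReal.coe_toReal] at hk
    rw [Real.norm_of_nonneg (by positivity)]
    calc ‖a ^ k‖ = (‖a ^ k‖ ^ (1 / k : ℝ)) ^ k := by
          rw [one_div, Real.rpow_inv_natCast_pow (norm_nonneg _) hk0]
      _ ≤ r ^ k := pow_le_pow_left₀ (by positivity) hk.le k
  obtain ⟨C, hC, hbound⟩ := Asymptotics.bound_of_isBigO_nat_atTop (Asymptotics.IsBigO.of_bound' hev)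
  refine ⟨C, hC, fun k => ?_⟩
  simpa using hbound (pow_ne_zero k (NNReal.coe_ne_zero.2 hr.ne'))

theorem mul_integral_exp_smul {𝔸 : Type*} [NormedRing 𝔸] [NormedAlgebra ℝ 𝔸] [CompleteSpace 𝔸]
    (a : 𝔸) (s : ℝ) : a * ∫ u in (0 : ℝ)..s, exp (u • a) = exp (s • a) - 1 := by
  have hcont : Continuous fun u : ℝ => exp (u • a) :=
    (differentiable_exp_smul_const ℝ a).continuous
  have hcomm := (ContinuousLinearMap.mul ℝ 𝔸 a).intervalIntegral_comp_comm
    (hcont.intervalIntegrable (μ := MeasureTheory.volume) 0 s)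
  simp only [ContinuousLinearMap.mul_apply'] at hcomm
  rw [← hcomm]
  simpa using intervalIntegral.integral_eq_sub_of_hasDerivAt
    (fun u _ => hasDerivAt_exp_smul_const' a u)
    ((continuous_const.mul hcont).intervalIntegrable 0 s)

end BanachAlgebra

section NatFloorGlue

variable {X : Type*} {T : ℝ} {f : ℕ → ℝ → X}

theorem eqOn_natFloor_glue (hT : 0 < T) (hf : ∀ k : ℕ, f (k + 1) ((k + 1) * T) = f k ((k + 1) * T))
    (k : ℕ) : Set.EqOn (fun t => f ⌊t / T⌋₊ t) (f k) (Set.Icc (k * T) ((k + 1) * T)) := by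
  rintro t ⟨hkt, htk⟩
  rcases htk.lt_or_eq with htk | rfl
  · have hfloor : ⌊t / T⌋₊ = k := by
      rw [Nat.floor_eq_iff (div_nonneg ((by positivity : (0 : ℝ) ≤ k * T).trans hkt) hT.le),
        le_div_iff₀ hT, div_lt_iff₀ hT]
      exact ⟨hkt, htk⟩
    simp only [hfloor]
  · have hfloor : ⌊((k : ℝ) + 1) * T / T⌋₊ = k + 1 := by
      rw [mul_div_cancel_right₀ _ hT.ne']
      exact_mod_cast Nat.floor_natCast (k + 1)
    simp only [hfloor]
    exact_mod_cast hf k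

theorem continuous_natFloor_glue [TopologicalSpace X] (hT : 0 < T) (hcont : ∀ k, Continuous (f k))
    (hf : ∀ k : ℕ, f (k + 1) ((k + 1) * T) = f k ((k + 1) * T)) :
    Continuous fun t => f ⌊t / T⌋₊ t := by
  have hlf : LocallyFinite fun m : ℤ => Set.Icc (m * T) ((m + 1) * T) :=
    locallyFinite_Icc_of_tendsto (tendsto_intCast_atTop_atTop.atTop_mul_const hT)
      ((tendsto_atBot_add_const_right _ 1
        (tendsto_intCast_atBot_iff.2 tendsto_id)).atBot_mul_const hT)
  have hcover : ⋃ m : ℤ, Set.Icc (m * T) ((m + 1) * T) = Set.univ := by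
    refine Set.eq_univ_of_forall fun t => Set.mem_iUnion.2 ⟨⌊t / T⌋, ?_, ?_⟩
    · rw [← le_div_iff₀ hT]; exact Int.floor_le _
    · rw [← div_le_iff₀ hT]; exact (Int.lt_floor_add_one _).le
  refine hlf.continuous hcover (fun _ => isClosed_Icc) fun m => ?_
  rcases le_or_gt 0 m with hm | hm
  · lift m to ℕ using hm
    exact (hcont m).continuousOn.congr (by exact_mod_cast eqOn_natFloor_glue hT hf m)
  · refine (hcont 0).continuousOn.congr fun t ht => ?_
    have ht0 : t ≤ 0 := ht.2.trans (mul_nonpos_of_nonpos_of_nonneg (by exact_mod_cast hm) hT.le)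
    simp only [Nat.floor_eq_zero.2 ((div_nonpos_of_nonpos_of_nonneg ht0 hT.le).trans_lt one_pos)]

end NatFloorGlue

theorem pow_natFloor_div_le_exp {r : ℝ} (hr0 : 0 < r) (hr1 : r ≤ 1) (t T : ℝ) :
    r ^ ⌊t / T⌋₊ ≤ r⁻¹ * Real.exp (Real.log r / T * t) := by
  have hfloor : t / T - 1 ≤ ⌊t / T⌋₊ := by linarith [Nat.lt_floor_add_one (t / T)]
  calc r ^ ⌊t / T⌋₊ = Real.exp (⌊t / T⌋₊ * Real.log r) := by
        rw [Real.exp_nat_mul, Real.exp_log hr0]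
    _ ≤ Real.exp ((t / T - 1) * Real.log r) :=
        Real.exp_le_exp.2 (mul_le_mul_of_nonpos_right hfloor (Real.log_nonpos hr0.le hr1))
    _ = r⁻¹ * Real.exp (Real.log r / T * t) := by
        rw [sub_mul, one_mul, Real.exp_sub, Real.exp_log hr0, div_eq_inv_mul, mul_comm]
        ring_nf

section LinftyOpNorm

-- The `L¹-L∞` operator norm on matrices is the operator norm for the sup norm on `m → ℝ`.
open scoped Norms.Operator

section Transition

variable {l m : Type*} [Fintype l] [Fintype m]

theorem Matrix.linfty_opNorm_map_algebraMap (M : Matrix l m ℝ) :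
    ‖M.map (algebraMap ℝ ℂ)‖ = ‖M‖ := by
  rw [linfty_opNorm_def, linfty_opNorm_def]
  simp

theorem Matrix.linfty_opNorm_le_of_forall_mulVec_le {M : Matrix l m ℝ} {B : ℝ} (hB : 0 ≤ B)
    (h : ∀ v, ‖M *ᵥ v‖ ≤ B * ‖v‖) : ‖M‖ ≤ B := by
  rw [linfty_opNorm_eq_opNorm]
  exact ContinuousLinearMap.opNorm_le_bound _ hB h

theorem Matrix.intervalIntegral_apply {F : ℝ → Matrix l m ℝ} (hF : Continuous F) (a b : ℝ)
    (i : l) (j : m) : (∫ u in a..b, F u) i j = ∫ u in a..b, F u i j :=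
  ((Matrix.entryLinearMap ℝ ℝ i j).toContinuousLinearMap.intervalIntegral_comp_comm
    (hF.intervalIntegrable a b)).symm

variable {ι : Type*} [Fintype ι] [DecidableEq ι] (A₀ A₁ : Matrix ι ι ℝ)

noncomputable def sampledTransition (s : ℝ) : Matrix ι ι ℝ :=
  exp (s • A₀) + (∫ u in (0 : ℝ)..s, exp (u • A₀)) * A₁

theorem sampledTransition_zero : sampledTransition A₀ A₁ 0 = 1 := by
  simp [sampledTransition]

theorem hasDerivAt_sampledTransition (s : ℝ) :
    HasDerivAt (sampledTransition A₀ A₁) (A₀ * sampledTransition A₀ A₁ s + A₁) s := by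
  have hexp : Continuous fun u : ℝ => exp (u • A₀) :=
    (differentiable_exp_smul_const ℝ A₀).continuous
  have hint : A₀ * ∫ u in (0 : ℝ)..s, exp (u • A₀) = exp (s • A₀) - 1 :=
    mul_integral_exp_smul A₀ s
  refine ((hasDerivAt_exp_smul_const' A₀ s).add
    ((hexp.integral_hasStrictDerivAt 0 s).hasDerivAt.mul_const A₁)).congr_deriv ?_
  rw [sampledTransition, mul_add, ← mul_assoc, hint, sub_mul, one_mul, add_assoc, sub_add_cancel]
  -- the two sides differ only in the topology through which `exp` is elaborated
  rfl

theorem continuous_sampledTransition : Continuous (sampledTransition A₀ A₁) :=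
  continuous_iff_continuousAt.2 fun s => (hasDerivAt_sampledTransition A₀ A₁ s).continuousAt

theorem sampledTransition_eq (T : ℝ) :
    sampledTransition A₀ A₁ T = exp (T • A₀) +
      Matrix.of fun i j => ∫ θ in (0 : ℝ)..T, (exp ((T - θ) • A₀) * A₁) i j := by
  have hexp : Continuous fun u : ℝ => exp (u • A₀) :=
    (differentiable_exp_smul_const ℝ A₀).continuous
  have hmul : (∫ u in (0 : ℝ)..T, exp (u • A₀)) * A₁ = ∫ u in (0 : ℝ)..T, exp (u • A₀) * A₁ :=
    ((ContinuousLinearMap.mul ℝ (Matrix ι ι ℝ)).flip A₁).intervalIntegral_comp_comm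
      (hexp.intervalIntegrable 0 T) |>.symm
  rw [sampledTransition, hmul]
  congr 1
  ext i j
  rw [Matrix.intervalIntegral_apply (F := fun u => exp (u • A₀) * A₁) (hexp.mul continuous_const),
    of_apply, intervalIntegral.integral_comp_sub_left (fun u => (exp (u • A₀) * A₁) i j) T]
  simp

theorem hasDerivAt_sampledTransition_sub_mulVec (a : ℝ) (v : ι → ℝ) (t : ℝ) :
    HasDerivAt (fun t => sampledTransition A₀ A₁ (t - a) *ᵥ v)
      (A₀ *ᵥ (sampledTransition A₀ A₁ (t - a) *ᵥ v) + A₁ *ᵥ v) t := by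
  let L := LinearMap.toContinuousLinearMap
    ((mulVecBilin ℝ ℝ : Matrix ι ι ℝ →ₗ[ℝ] (ι → ℝ) →ₗ[ℝ] ι → ℝ).flip v)
  refine (L.hasFDerivAt.comp_hasDerivAt t
    ((hasDerivAt_sampledTransition A₀ A₁ (t - a)).comp_sub_const t a)).congr_deriv ?_
  show (A₀ * _ + A₁) *ᵥ v = A₀ *ᵥ (_ *ᵥ v) + A₁ *ᵥ v
  rw [add_mulVec, mulVec_mulVec]

end Transition

variable {n : ℕ} {A₀ A₁ : Matrix (Fin n) (Fin n) ℝ} {T : ℝ} {x : ℝ → Fin n → ℝ}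

theorem IsLinSampledSolution.eq_sampledTransition_mulVec (hx : IsLinSampledSolution A₀ A₁ T x)
    (k : ℕ) {t : ℝ} (ht : t ∈ Set.Icc (k * T) ((k + 1) * T)) :
    x t = sampledTransition A₀ A₁ (t - k * T) *ᵥ x (k * T) := by
  have hlip : ∀ _ : ℝ, LipschitzWith _ fun y => A₀ *ᵥ y + A₁ *ᵥ x (k * T) := fun _ =>
    (LinearMap.toContinuousLinearMap (mulVecLin A₀)).lipschitz.add (LipschitzWith.const _)
  refine ODE_solution_unique hlip hx.1.continuousOn
    (fun s hs => (hx.2 k s (Set.Ico_subset_Icc_self hs)).mono_of_mem_nhdsWithin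
      (Icc_mem_nhdsGE_of_mem hs))
    (continuous_iff_continuousAt.2 fun s =>
      (hasDerivAt_sampledTransition_sub_mulVec A₀ A₁ _ _ s).continuousAt).continuousOn
    (fun s _ => (hasDerivAt_sampledTransition_sub_mulVec A₀ A₁ _ _ s).hasDerivWithinAt)
    (by simp [sampledTransition_zero]) ht

theorem IsLinSampledSolution.apply_natCast_mul (hT : 0 ≤ T) (hx : IsLinSampledSolution A₀ A₁ T x)
    (k : ℕ) : x (k * T) = sampledTransition A₀ A₁ T ^ k *ᵥ x 0 := by
  induction k with
  | zero => simp
  | succ k ih =>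
    have h := hx.eq_sampledTransition_mulVec k (t := (k + 1) * T) ⟨by nlinarith, le_rfl⟩
    rw [Nat.cast_succ, h, ih, mulVec_mulVec, pow_succ', add_mul, one_mul, add_sub_cancel_left]

theorem exists_isLinSampledSolution (hT : 0 < T) (v : Fin n → ℝ) :
    ∃ x, IsLinSampledSolution A₀ A₁ T x ∧ x 0 = v := by
  set M := sampledTransition A₀ A₁ T
  let f : ℕ → ℝ → Fin n → ℝ := fun k t => sampledTransition A₀ A₁ (t - k * T) *ᵥ (M ^ k *ᵥ v)
  have hglue : ∀ k : ℕ, f (k + 1) ((k + 1) * T) = f k ((k + 1) * T) := by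
    intro k
    simp [f, M, sampledTransition_zero, pow_succ', mulVec_mulVec, add_mul]
  have hderiv : ∀ k t, HasDerivAt (f k) (A₀ *ᵥ f k t + A₁ *ᵥ f k (k * T)) t := by
    intro k t
    have hf0 : f k (k * T) = M ^ k *ᵥ v := by simp [f, sampledTransition_zero]
    rw [hf0]
    exact hasDerivAt_sampledTransition_sub_mulVec A₀ A₁ _ _ t
  refine ⟨fun t => f ⌊t / T⌋₊ t, ⟨continuous_natFloor_glue hT
    (fun k => continuous_iff_continuousAt.2 fun t => (hderiv k t).continuousAt) hglue,
    fun k t ht => ?_⟩, by simp [f, sampledTransition_zero]⟩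
  have heq := eqOn_natFloor_glue hT hglue k
  rw [heq ht, heq ⟨le_rfl, by nlinarith⟩]
  exact (hderiv k t).hasDerivWithinAt.congr heq (heq ht)

def IsLinSampledExpStable (A₀ A₁ : Matrix (Fin n) (Fin n) ℝ) (T : ℝ) : Prop :=
  ∃ K > (0 : ℝ), ∃ γ > (0 : ℝ), ∀ x : ℝ → Fin n → ℝ, IsLinSampledSolution A₀ A₁ T x →
    ∀ t : ℝ, 0 ≤ t → ‖x t‖ ≤ K * ‖x 0‖ * Real.exp (-γ * t)

theorem IsLinSampledSolution.norm_apply_le (hT : 0 < T) (hx : IsLinSampledSolution A₀ A₁ T x)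
    {C : ℝ} (hC : ∀ s ∈ Set.Icc 0 T, ‖sampledTransition A₀ A₁ s‖ ≤ C) {t : ℝ} (ht : 0 ≤ t) :
    ‖x t‖ ≤ C * ‖sampledTransition A₀ A₁ T ^ ⌊t / T⌋₊‖ * ‖x 0‖ := by
  set k := ⌊t / T⌋₊
  have hkt : (k : ℝ) * T ≤ t := (le_div_iff₀ hT).1 (Nat.floor_le (div_nonneg ht hT.le))
  have htk : t ≤ (k + 1) * T := (div_le_iff₀ hT).1 (Nat.lt_floor_add_one _).le
  rw [hx.eq_sampledTransition_mulVec k ⟨hkt, htk⟩, hx.apply_natCast_mul hT.le, mul_assoc]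
  calc _ ≤ ‖sampledTransition A₀ A₁ (t - k * T)‖ * ‖sampledTransition A₀ A₁ T ^ k *ᵥ x 0‖ :=
        linfty_opNorm_mulVec _ _
    _ ≤ C * (‖sampledTransition A₀ A₁ T ^ k‖ * ‖x 0‖) :=
        mul_le_mul (hC _ ⟨by linarith, by linarith⟩) (linfty_opNorm_mulVec _ _) (norm_nonneg _)
          ((norm_nonneg _).trans (hC 0 ⟨le_rfl, hT.le⟩))

theorem isLinSampledExpStable_of_norm_pow_le (hT : 0 < T) {C r : ℝ} (hC : 0 < C) (hr0 : 0 < r)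
    (hr1 : r < 1) (h : ∀ k : ℕ, ‖sampledTransition A₀ A₁ T ^ k‖ ≤ C * r ^ k) :
    IsLinSampledExpStable A₀ A₁ T := by
  obtain ⟨C₁, hC₁⟩ := (isCompact_Icc (a := 0) (b := T)).exists_bound_of_continuousOn
    (continuous_sampledTransition A₀ A₁).continuousOn
  -- `γ = -log r / T` makes `r ^ k = exp (-γ * (k * T))`
  refine ⟨max C₁ 1 * C * r⁻¹, by positivity, -Real.log r / T,
    div_pos (neg_pos.2 (Real.log_neg hr0 hr1)) hT, fun x hx t ht => ?_⟩
  calc ‖x t‖ ≤ max C₁ 1 * ‖sampledTransition A₀ A₁ T ^ ⌊t / T⌋₊‖ * ‖x 0‖ :=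
        hx.norm_apply_le hT (fun s hs => (hC₁ s hs).trans (le_max_left _ _)) ht
    _ ≤ max C₁ 1 * (C * (r⁻¹ * Real.exp (Real.log r / T * t))) * ‖x 0‖ := by
        gcongr
        exact (h _).trans (by gcongr; exact pow_natFloor_div_le_exp hr0 hr1.le t T)
    _ = max C₁ 1 * C * r⁻¹ * ‖x 0‖ * Real.exp (-(-Real.log r / T) * t) := by
        rw [neg_div, neg_neg]
        ring

theorem norm_pow_le_of_isLinSampledExpStable (hT : 0 < T) {K γ : ℝ} (hK : 0 ≤ K)
    (h : ∀ x, IsLinSampledSolution A₀ A₁ T x → ∀ t, 0 ≤ t → ‖x t‖ ≤ K * ‖x 0‖ * Real.exp (-γ * t))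
    (k : ℕ) : ‖sampledTransition A₀ A₁ T ^ k‖ ≤ K * Real.exp (-γ * (k * T)) := by
  refine linfty_opNorm_le_of_forall_mulVec_le (by positivity) fun v => ?_
  obtain ⟨x, hx, rfl⟩ := exists_isLinSampledSolution (A₀ := A₀) (A₁ := A₁) hT v
  rw [← hx.apply_natCast_mul hT.le, mul_right_comm]
  exact h x hx _ (by positivity)

theorem isLinSampledExpStable_iff_spectralRadius_lt_one (hT : 0 < T) :
    IsLinSampledExpStable A₀ A₁ T ↔
      spectralRadius ℂ ((sampledTransition A₀ A₁ T).map (algebraMap ℝ ℂ)) < 1 := by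
  set M := sampledTransition A₀ A₁ T
  have hnorm : ∀ k : ℕ, ‖M.map (algebraMap ℝ ℂ) ^ k‖ = ‖M ^ k‖ := fun k => by
    rw [← Matrix.map_pow, linfty_opNorm_map_algebraMap]
  constructor
  · rintro ⟨K, hK, γ, hγ, h⟩
    have hdecay : Tendsto (fun k : ℕ => K * Real.exp (-γ * (k * T))) atTop (𝓝 0) := by
      simpa using (Real.tendsto_exp_atBot.comp ((tendsto_natCast_atTop_atTop.atTop_mul_const hT
        ).const_mul_atTop_of_neg (neg_neg_of_pos hγ))).const_mul K
    exact spectralRadius_lt_one_of_tendsto_norm_pow (squeeze_zero (fun _ => norm_nonneg _)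
      (fun k => (hnorm k).trans_le (norm_pow_le_of_isLinSampledExpStable hT hK.le h k)) hdecay)
  · intro hρ
    obtain ⟨r, hρr, hr1⟩ := ENNReal.lt_iff_exists_nnreal_btwn.1 hρ
    obtain ⟨C, hC, hbound⟩ := exists_norm_pow_le_of_spectralRadius_lt hρr
    exact isLinSampledExpStable_of_norm_pow_le hT hC (ENNReal.coe_pos.1 (pos_of_gt hρr))
      (by exact_mod_cast hr1) fun k => (hnorm k).symm.trans_le (hbound k)

end LinftyOpNorm

/-- The linear sampled-data system `ẋ(t) = A₀x(t) + A₁x(t_k)` with constant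
sampling period `T > 0` is globally exponentially stable iff the spectral radius
of `e^{A₀T} + ∫₀ᵀ e^{A₀(T−θ)} A₁ dθ` is strictly less than one. -/
theorem linear_sampled_data_stability_iff {n : ℕ}
    (A₀ A₁ : Matrix (Fin n) (Fin n) ℝ) (T : ℝ) (hT : 0 < T) :
    (∃ K > (0 : ℝ), ∃ γ > (0 : ℝ), ∀ x : ℝ → Fin n → ℝ,
        IsLinSampledSolution A₀ A₁ T x →
          ∀ t : ℝ, 0 ≤ t → ‖x t‖ ≤ K * ‖x 0‖ * Real.exp (-γ * t)) ↔
      spectralRadius ℂ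
        ((NormedSpace.exp (T • A₀) +
            Matrix.of fun i j =>
              ∫ θ in (0 : ℝ)..T, (NormedSpace.exp ((T - θ) • A₀) * A₁) i j).map
          (algebraMap ℝ ℂ)) < 1 := by
  rw [← sampledTransition_eq]
  exact isLinSampledExpStable_iff_spectralRadius_lt_one hT
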